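/- Let 2^m < n ≤ 2^{m+1}. Then the Walsh-Nörlund kernel satisfies Q_n F_n^w = Q_n D_{2^m} − w_{2^m−1} Σ_{l=1}^{2^m−2} (q_{n−2^m+l} − q_{n−2^m+l+1})·l·K_l^w − w_{2^m−1}·(2^m−1)·q_{n−1}·K_{2^m−1}^w + w_{2^m}·Q_{n−2^m}·F_{n−2^m}^w, as functions on the dyadic group G. -/

import Mathlib

open Finset

/-- The dyadic (Walsh) group `G = ∏_{k ∈ ℕ} ℤ₂` with coordinatewise mod-2 addition. -/
abbrev G : Type := ℕ → ZMod 2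

/-- The Walsh function `w_n(x) = ∏_k r_k(x)^{n_k} = (-1)^{Σ_k n_k x_k}`,
where `n = Σ_k n_k 2^k` in binary and `r_k(x) = (-1)^{x_k}`. -/
noncomputable def walsh (n : ℕ) (x : G) : ℝ :=
  (-1 : ℝ) ^ (∑ k ∈ Finset.range n.size, (n.testBit k).toNat * (x k).val)

/-- The Walsh–Dirichlet kernel `D_n = Σ_{i=0}^{n-1} w_i` (so `D_0 = 0`). -/
noncomputable def dirichlet (n : ℕ) (x : G) : ℝ :=
  ∑ i ∈ Finset.range n, walsh i x

/-- The Walsh–Fejér kernel `K_n^w = n^{-1} Σ_{k=1}^n D_k`. -/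
noncomputable def fejerKernel (n : ℕ) (x : G) : ℝ :=
  (n : ℝ)⁻¹ * ∑ k ∈ Finset.Icc 1 n, dirichlet k x

/-- `Q_n = Σ_{k=0}^{n-1} q_k`. -/
def Qn (q : ℕ → ℝ) (n : ℕ) : ℝ := ∑ k ∈ Finset.range n, q k

/-- The Walsh–Nörlund kernel `F_n^w = Q_n^{-1} Σ_{k=1}^n q_{n-k} D_k`. -/
noncomputable def norlundKernel (q : ℕ → ℝ) (n : ℕ) (x : G) : ℝ :=
  (Qn q n)⁻¹ * ∑ k ∈ Finset.Icc 1 n, q (n - k) * dirichlet k x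

/-!
For `i < 2^m`, the binary digits give `2^m + i = 2^m xor i` and
`2^m - 1 - i = (2^m - 1) xor i`, and `w_{a xor b} = w_a w_b`; summing yields
`D_{2^m + j} = D_{2^m} + w_{2^m} D_j` and `D_{2^m - j} = D_{2^m} - w_{2^m - 1} D_j` for `j ≤ 2^m`.
Splitting `Σ_{k=1}^n q_{n-k} D_k` at `k = 2^m`, the upper part becomes `Q_{n-2^m} D_{2^m}` plus
`w_{2^m}` times the kernel of order `n - 2^m`; the lower part becomes
`(Q_n - Q_{n-2^m}) D_{2^m}` minus `w_{2^m-1} Σ_{j<2^m} q_{n-2^m+j} D_j`, and Abel summation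
turns the last sum into Fejér kernels, since `Σ_{j=1}^l D_j = l K_l`.
-/

section Walsh

lemma walsh_eq_of_lt_two_pow {n K : ℕ} (hn : n < 2 ^ K) (x : G) :
    walsh n x = (-1 : ℝ) ^ (∑ k ∈ range K, (n.testBit k).toNat * (x k).val) := by
  unfold walsh
  congr 1
  refine sum_subset (range_subset_range.2 (Nat.size_le.2 hn)) fun k _ hk => ?_
  rw [mem_range, not_lt] at hk
  simp [Nat.testBit_lt_two_pow (Nat.size_le.1 hk)]

lemma walsh_xor (a b : ℕ) (x : G) : walsh (a ^^^ b) x = walsh a x * walsh b x := by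
  set K := max a.size b.size
  have ha : a < 2 ^ K := Nat.size_le.1 (le_max_left _ _)
  have hb : b < 2 ^ K := Nat.size_le.1 (le_max_right _ _)
  rw [walsh_eq_of_lt_two_pow ha, walsh_eq_of_lt_two_pow hb,
    walsh_eq_of_lt_two_pow (Nat.xor_lt_two_pow ha hb), ← pow_add, ← sum_add_distrib,
    neg_one_pow_eq_pow_mod_two, neg_one_pow_eq_pow_mod_two (R := ℝ) (n := ∑ k ∈ range K, _)]
  congr 1
  refine Nat.ModEq.sum fun k _ => ?_
  rw [Nat.testBit_xor]
  cases a.testBit k <;> cases b.testBit k <;> simp [Nat.ModEq, ← two_mul]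

lemma two_pow_add_eq_xor {m i : ℕ} (h : i < 2 ^ m) : 2 ^ m + i = 2 ^ m ^^^ i := by
  refine Nat.eq_of_testBit_eq fun k => ?_
  have hbit := Nat.testBit_two_pow_mul_add 1 h k
  rw [mul_one] at hbit
  rw [hbit, Nat.testBit_xor, Nat.testBit_two_pow]
  split_ifs with hk
  · simp [show m ≠ k by omega]
  · have hik : i < 2 ^ k := h.trans_le (Nat.pow_le_pow_right two_pos (by omega))
    rw [← Nat.pow_zero 2, Nat.testBit_two_pow, Nat.testBit_lt_two_pow hik]
    simp only [decide_eq_decide, Bool.xor_false]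
    omega

lemma two_pow_sub_one_sub_eq_xor {m i : ℕ} (h : i < 2 ^ m) :
    2 ^ m - 1 - i = (2 ^ m - 1) ^^^ i := by
  refine Nat.eq_of_testBit_eq fun k => ?_
  rw [Nat.sub_sub, Nat.add_comm, Nat.testBit_two_pow_sub_succ h, Nat.testBit_xor,
    Nat.testBit_two_pow_sub_one]
  by_cases hk : k < m
  · simp [hk]
  · have hik : i < 2 ^ k := h.trans_le (Nat.pow_le_pow_right two_pos (by omega))
    simp [hk, Nat.testBit_lt_two_pow hik]

lemma walsh_two_pow_add {m i : ℕ} (h : i < 2 ^ m) (x : G) :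
    walsh (2 ^ m + i) x = walsh (2 ^ m) x * walsh i x := by
  rw [two_pow_add_eq_xor h, walsh_xor]

lemma walsh_two_pow_sub_one_sub {m i : ℕ} (h : i < 2 ^ m) (x : G) :
    walsh (2 ^ m - 1 - i) x = walsh (2 ^ m - 1) x * walsh i x := by
  rw [two_pow_sub_one_sub_eq_xor h, walsh_xor]

end Walsh

section Dirichlet

lemma dirichlet_zero (x : G) : dirichlet 0 x = 0 := sum_range_zero _

lemma dirichlet_two_pow_add {m j : ℕ} (h : j ≤ 2 ^ m) (x : G) :
    dirichlet (2 ^ m + j) x = dirichlet (2 ^ m) x + walsh (2 ^ m) x * dirichlet j x := by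
  rw [dirichlet, dirichlet, dirichlet, sum_range_add, mul_sum]
  congr 1
  exact sum_congr rfl fun i hi => walsh_two_pow_add ((mem_range.1 hi).trans_le h) x

lemma dirichlet_two_pow_sub {m j : ℕ} (h : j ≤ 2 ^ m) (x : G) :
    dirichlet (2 ^ m - j) x = dirichlet (2 ^ m) x - walsh (2 ^ m - 1) x * dirichlet j x := by
  have hsplit : dirichlet (2 ^ m) x = dirichlet (2 ^ m - j) x +
      ∑ i ∈ range j, walsh (2 ^ m - 1 - (j - 1 - i)) x := by
    rw [dirichlet, dirichlet, ← Nat.sub_add_cancel h, sum_range_add, Nat.sub_add_cancel h]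
    congr 1
    refine sum_congr rfl fun i hi => ?_
    have := mem_range.1 hi
    congr 1
    omega
  rw [hsplit, sum_range_reflect (fun i => walsh (2 ^ m - 1 - i) x),
    sum_congr rfl fun i hi => walsh_two_pow_sub_one_sub ((mem_range.1 hi).trans_le h) x,
    ← mul_sum]
  simp only [dirichlet]
  ring

lemma natCast_mul_fejerKernel (l : ℕ) (x : G) :
    (l : ℝ) * fejerKernel l x = ∑ j ∈ Icc 1 l, dirichlet j x := by
  rcases Nat.eq_zero_or_pos l with rfl | hl
  · simp
  · rw [fejerKernel, ← mul_assoc, mul_inv_cancel₀ (by positivity), one_mul]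

end Dirichlet

section Sums

variable {M : Type*} [AddCommMonoid M]

lemma sum_Icc_one_eq_sum_range (f : ℕ → M) (t : ℕ) :
    ∑ k ∈ Icc 1 t, f k = ∑ k ∈ range t, f (k + 1) := by
  rw [← Ico_add_one_right_eq_Icc, sum_Ico_eq_sum_range, Nat.add_sub_cancel]
  simp only [add_comm 1]

lemma sum_range_eq_sum_Icc_one {f : ℕ → M} (hf : f 0 = 0) (t : ℕ) :
    ∑ k ∈ range t, f k = ∑ k ∈ Icc 1 (t - 1), f k := by
  cases t with
  | zero => simp
  | succ t => rw [sum_range_succ', hf, add_zero, Nat.add_sub_cancel, sum_Icc_one_eq_sum_range]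

lemma sum_Icc_one_add (f : ℕ → M) (a b : ℕ) :
    ∑ k ∈ Icc 1 (a + b), f k = ∑ k ∈ Icc 1 a, f k + ∑ k ∈ Icc 1 b, f (a + k) := by
  simp only [sum_Icc_one_eq_sum_range, sum_range_add, add_assoc]

lemma sum_Icc_one_sub (f : ℕ → M) (t : ℕ) :
    ∑ k ∈ Icc 1 t, f (t - k) = ∑ k ∈ range t, f k := by
  rw [sum_Icc_one_eq_sum_range, ← sum_range_reflect f t]
  simp only [Nat.sub_sub, add_comm 1]

lemma sum_Icc_one_mul_eq_sum_by_parts {R : Type*} [CommRing R] (a D : ℕ → R) :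
    ∀ M : ℕ, ∑ j ∈ Icc 1 M, a j * D j =
      ∑ l ∈ Icc 1 (M - 1), (a l - a (l + 1)) * ∑ j ∈ Icc 1 l, D j
        + a M * ∑ j ∈ Icc 1 M, D j
  | 0 => by simp
  | 1 => by simp
  | M + 2 => by
    have ih := sum_Icc_one_mul_eq_sum_by_parts a D (M + 1)
    rw [Nat.add_sub_cancel] at ih
    rw [sum_Icc_succ_top (by omega : 1 ≤ M + 2), ih, show M + 2 - 1 = M + 1 from rfl,
      sum_Icc_succ_top (by omega : 1 ≤ M + 1) fun l => (a l - a (l + 1)) * ∑ j ∈ Icc 1 l, D j,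
      sum_Icc_succ_top (by omega : 1 ≤ M + 2) D]
    ring

end Sums

lemma Qn_mul_norlundKernel {q : ℕ → ℝ} (hq : ∀ k, 0 ≤ q k) (n : ℕ) (x : G) :
    Qn q n * norlundKernel q n x = ∑ k ∈ Icc 1 n, q (n - k) * dirichlet k x := by
  rcases eq_or_ne (Qn q n) 0 with h0 | h0
  · -- `Q_n = 0` forces `q_0 = ⋯ = q_{n-1} = 0`, so both sides vanish
    rw [h0, zero_mul, eq_comm]
    refine sum_eq_zero fun k hk => ?_
    have hk := mem_Icc.1 hk
    rw [(sum_eq_zero_iff_of_nonneg fun i _ => hq i).1 h0 (n - k) (mem_range.2 (by omega)),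
      zero_mul]
  · rw [norlundKernel, ← mul_assoc, mul_inv_cancel₀ h0, one_mul]

section Splitting

variable (c : ℕ → ℝ) {m : ℕ} (x : G)

lemma sum_Icc_mul_dirichlet_two_pow_add {r : ℕ} (hr : r ≤ 2 ^ m) :
    ∑ j ∈ Icc 1 r, c j * dirichlet (2 ^ m + j) x =
      (∑ j ∈ Icc 1 r, c j) * dirichlet (2 ^ m) x
        + walsh (2 ^ m) x * ∑ j ∈ Icc 1 r, c j * dirichlet j x := by
  rw [sum_mul, mul_sum, ← sum_add_distrib]
  refine sum_congr rfl fun j hj => ?_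
  rw [dirichlet_two_pow_add ((mem_Icc.1 hj).2.trans hr)]
  ring

lemma sum_Icc_two_pow_mul_dirichlet (r : ℕ) :
    ∑ k ∈ Icc 1 (2 ^ m), c (2 ^ m + r - k) * dirichlet k x =
      (∑ j ∈ range (2 ^ m), c (r + j)) * dirichlet (2 ^ m) x
        - walsh (2 ^ m - 1) x * ∑ j ∈ Icc 1 (2 ^ m - 1), c (r + j) * dirichlet j x := by
  have hreflect : ∑ k ∈ Icc 1 (2 ^ m), c (2 ^ m + r - k) * dirichlet k x =
      ∑ j ∈ range (2 ^ m), c (r + j) * dirichlet (2 ^ m - j) x := by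
    rw [← sum_Icc_one_sub]
    refine sum_congr rfl fun k hk => ?_
    have := mem_Icc.1 hk
    rw [Nat.sub_sub_self this.2]
    congr 2
    omega
  rw [hreflect, ← sum_range_eq_sum_Icc_one (by rw [dirichlet_zero, mul_zero]), sum_mul, mul_sum,
    ← sum_sub_distrib]
  refine sum_congr rfl fun j hj => ?_
  rw [dirichlet_two_pow_sub (mem_range.1 hj).le]
  ring

end Splitting

theorem norlundKernel_decomposition_general (q : ℕ → ℝ) (hnn : ∀ k, 0 ≤ q k)
    (m n : ℕ) (h1 : 2 ^ m < n) (h2 : n ≤ 2 ^ (m + 1)) (x : G) :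
    Qn q n * norlundKernel q n x =
      Qn q n * dirichlet (2 ^ m) x
        - walsh (2 ^ m - 1) x *
            ∑ l ∈ Finset.Icc 1 (2 ^ m - 2),
              (q (n - 2 ^ m + l) - q (n - 2 ^ m + l + 1)) * l * fejerKernel l x
        - walsh (2 ^ m - 1) x * (((2 ^ m - 1 : ℕ) : ℝ) * q (n - 1) * fejerKernel (2 ^ m - 1) x)
        + walsh (2 ^ m) x * (Qn q (n - 2 ^ m) * norlundKernel q (n - 2 ^ m) x) := by
  obtain ⟨r, rfl⟩ : ∃ r, n = 2 ^ m + r := ⟨n - 2 ^ m, by omega⟩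
  have hr : r ≤ 2 ^ m := by rw [pow_succ] at h2; omega
  have hQn : Qn q (2 ^ m + r) = ∑ j ∈ range (2 ^ m), q (r + j) + ∑ j ∈ range r, q j := by
    rw [Qn, add_comm, sum_range_add, add_comm]
  have hsplit : ∑ k ∈ Icc 1 (2 ^ m + r), q (2 ^ m + r - k) * dirichlet k x =
      ∑ k ∈ Icc 1 (2 ^ m), q (2 ^ m + r - k) * dirichlet k x
        + ∑ j ∈ Icc 1 r, q (r - j) * dirichlet (2 ^ m + j) x := by
    rw [sum_Icc_one_add]
    simp only [Nat.add_sub_add_left]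
  have habel : ∑ j ∈ Icc 1 (2 ^ m - 1), q (r + j) * dirichlet j x =
      ∑ l ∈ Icc 1 (2 ^ m - 2), (q (r + l) - q (r + l + 1)) * l * fejerKernel l x
        + ((2 ^ m - 1 : ℕ) : ℝ) * q (2 ^ m + r - 1) * fejerKernel (2 ^ m - 1) x := by
    rw [sum_Icc_one_mul_eq_sum_by_parts, Nat.sub_sub, ← natCast_mul_fejerKernel,
      show r + (2 ^ m - 1) = 2 ^ m + r - 1 by have := Nat.one_le_two_pow (n := m); omega]
    simp only [← natCast_mul_fejerKernel, add_assoc, mul_assoc]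
    ring
  rw [Qn_mul_norlundKernel hnn, Qn_mul_norlundKernel hnn, Nat.add_sub_cancel_left, hsplit,
    sum_Icc_two_pow_mul_dirichlet, sum_Icc_mul_dirichlet_two_pow_add _ _ hr, sum_Icc_one_sub,
    habel, hQn]
  ring

/-- Lemma 2: for `2^m < n ≤ 2^{m+1}`,
`Q_n F_n^w = Q_n D_{2^m} − w_{2^m−1} Σ_{l=1}^{2^m−2} (q_{n−2^m+l} − q_{n−2^m+l+1}) l K_l^w
 − w_{2^m−1} (2^m−1) q_{n−1} K_{2^m−1}^w + w_{2^m} Q_{n−2^m} F_{n−2^m}^w`. -/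
theorem norlundKernel_decomposition (q : ℕ → ℝ) (hnn : ∀ k, 0 ≤ q k)
    (m n : ℕ) (h1 : 2 ^ m < n) (h2 : n ≤ 2 ^ (m + 1)) (hQ : 0 < Qn q n) (x : G) :
    Qn q n * norlundKernel q n x =
      Qn q n * dirichlet (2 ^ m) x
        - walsh (2 ^ m - 1) x *
            ∑ l ∈ Finset.Icc 1 (2 ^ m - 2),
              (q (n - 2 ^ m + l) - q (n - 2 ^ m + l + 1)) * l * fejerKernel l x
        - walsh (2 ^ m - 1) x * (((2 ^ m - 1 : ℕ) : ℝ) * q (n - 1) * fejerKernel (2 ^ m - 1) x)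
        + walsh (2 ^ m) x * (Qn q (n - 2 ^ m) * norlundKernel q (n - 2 ^ m) x) :=
  norlundKernel_decomposition_general q hnn m n h1 h2 x
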